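/- Let Δ > 0, let f, g : ℝ → ℝ be measurable, and let α, β, γ ∈ [1, ∞] satisfy 1/α + 1/β − 1 = 1/γ. Suppose that the function t ↦ ‖(f(t + sΔ))_{s∈ℤ}‖_{ℓ^α} belongs to L^{2α}([0,Δ]) and the function t ↦ ‖(g(t + sΔ))_{s∈ℤ}‖_{ℓ^β} belongs to L^{2β}([0,Δ]). Then the sequence s ↦ ∫_ℝ |f(t) g(t + sΔ)| dt belongs to ℓ^γ(ℤ). -/

import Mathlib

open MeasureTheory Set ENNReal

/-- ℓ^p norm (p ∈ [1,∞], ENNReal) of a ℤ-indexed family of extended nonnegative reals. -/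
noncomputable def lnormZ (p : ℝ≥0∞) (a : ℤ → ℝ≥0∞) : ℝ≥0∞ :=
  if p = ∞ then ⨆ s, a s else (∑' s, a s ^ p.toReal) ^ (1 / p.toReal)

/-- Membership of an ℝ≥0∞-valued function in L^p([0,Δ]) (p ∈ [1,∞], ENNReal). -/
noncomputable def MemLpGrid (p : ℝ≥0∞) (Δ : ℝ) (F : ℝ → ℝ≥0∞) : Prop :=
  if p = ∞ then essSup F (volume.restrict (Ioc 0 Δ)) < ∞
  else ∫⁻ t in Ioc (0 : ℝ) Δ, F t ^ p.toReal < ∞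

/-! Writing `t = τ + nΔ` with `τ ∈ (0, Δ]`, the `s`-th term becomes
`∫_{(0,Δ]} ∑ₙ aτ(n) bτ(n + s) dτ`, a correlation of the fibre sequences `aτ(n) = |f(τ + nΔ)|`,
`bτ(n) = |g(τ + nΔ)|` averaged over `τ`.

For `γ = ∞`, Hölder in `n` bounds every term by `∫ ‖aτ‖_α ‖bτ‖_β dτ`, which is finite by
Cauchy–Schwarz since `L^{2α}, L^{2β} ⊂ L²` on a bounded interval. For `γ < ∞` the classical proof
of Young's inequality runs on `(0, Δ] × ℤ`: the splitting
`a b = (a^α b^β)^{1/γ} a^{1 - α/γ} b^{1 - β/γ}` and Hölder with three exponents give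
`∑ₛ cₛ^γ ≤ (∫ ‖aτ‖_α^α ‖bτ‖_β^β) (∫ ‖aτ‖_α^α)^{γ/α - 1} (∫ ‖bτ‖_β^β)^{γ/β - 1}`, and
Cauchy–Schwarz bounds the first factor by the `L^{2α}` and `L^{2β}` norms. -/

lemma rpow_mul_rpow_sub_eq_self (z : ℝ≥0∞) {p r : ℝ} (hp : 0 < p) (hr : 0 < r)
    (hpr : 0 ≤ 1 / p - 1 / r) : (z ^ p) ^ (1 / r) * (z ^ p) ^ (1 / p - 1 / r) = z := by
  rw [← ENNReal.rpow_add_of_nonneg _ _ (by positivity) hpr, add_sub_cancel,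
    one_div, ENNReal.rpow_rpow_inv hp.ne']

lemma lintegral_mul_le_of_young_exponents {Y : Type*} [MeasurableSpace Y] (ν : Measure Y)
    {x y : Y → ℝ≥0∞} (hx : AEMeasurable x ν) (hy : AEMeasurable y ν) {p q r : ℝ}
    (hp : 1 ≤ p) (hq : 1 ≤ q) (hr : 0 < r) (hpqr : 1 / p + 1 / q = 1 + 1 / r) :
    ∫⁻ t, x t * y t ∂ν ≤ (∫⁻ t, x t ^ p * y t ^ q ∂ν) ^ (1 / r) *
      (∫⁻ t, x t ^ p ∂ν) ^ (1 / p - 1 / r) * (∫⁻ t, y t ^ q ∂ν) ^ (1 / q - 1 / r) := by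
  have hr' : 0 ≤ 1 / r := by positivity
  have hpr : 0 ≤ 1 / p - 1 / r := by linarith [(div_le_one (by linarith : (0 : ℝ) < q)).2 hq]
  have hqr : 0 ≤ 1 / q - 1 / r := by linarith [(div_le_one (by linarith : (0 : ℝ) < p)).2 hp]
  have hsplit (t : Y) : x t * y t = (x t ^ p * y t ^ q) ^ (1 / r) * (x t ^ p) ^ (1 / p - 1 / r) *
      (y t ^ q) ^ (1 / q - 1 / r) := by
    rw [ENNReal.mul_rpow_of_nonneg _ _ hr']
    calc x t * y t = (x t ^ p) ^ (1 / r) * (x t ^ p) ^ (1 / p - 1 / r) *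
          ((y t ^ q) ^ (1 / r) * (y t ^ q) ^ (1 / q - 1 / r)) := by
          rw [rpow_mul_rpow_sub_eq_self _ (by linarith) hr hpr,
            rpow_mul_rpow_sub_eq_self _ (by linarith) hr hqr]
      _ = _ := by ring
  have holder := ENNReal.lintegral_prod_norm_pow_le (μ := ν) Finset.univ
    (f := ![fun t => x t ^ p * y t ^ q, fun t => x t ^ p, fun t => y t ^ q])
    (p := ![1 / r, 1 / p - 1 / r, 1 / q - 1 / r])
    (by
      intro i _
      fin_cases i
      exacts [(hx.pow_const p).mul (hy.pow_const q), hx.pow_const p, hy.pow_const q])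
    (by
      simp only [Fin.sum_univ_three, Matrix.cons_val_zero, Matrix.cons_val_one, Matrix.cons_val]
      linarith)
    (by
      intro i _
      fin_cases i
      exacts [hr', hpr, hqr])
  simp only [Fin.prod_univ_three, Matrix.cons_val_zero, Matrix.cons_val_one,
    Matrix.cons_val] at holder
  simpa only [hsplit] using holder

lemma ne_top_of_young_exponents {p q r : ℝ≥0∞} (hq : 1 ≤ q) (hr : r ≠ ∞)
    (hpqr : 1 / p + 1 / q = 1 + 1 / r) : p ≠ ∞ := by
  rintro rfl
  simp only [one_div, inv_top, zero_add] at hpqr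
  have h : 1 + r⁻¹ ≤ 1 + 0 := by rw [add_zero, ← hpqr]; exact ENNReal.inv_le_one.2 hq
  rw [ENNReal.add_le_add_iff_left one_ne_top, nonpos_iff_eq_zero, ENNReal.inv_eq_zero] at h
  exact hr h

lemma toReal_young_exponents {p q r : ℝ≥0∞} (hp : 1 ≤ p) (hq : 1 ≤ q) (hr0 : r ≠ 0)
    (hpqr : 1 / p + 1 / q = 1 + 1 / r) : 1 / p.toReal + 1 / q.toReal = 1 + 1 / r.toReal := by
  have h := congrArg ENNReal.toReal hpqr
  have hp0 : p ≠ 0 := (zero_lt_one.trans_le hp).ne'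
  have hq0 : q ≠ 0 := (zero_lt_one.trans_le hq).ne'
  rw [ENNReal.toReal_add (by simpa using hp0) (by simpa using hq0),
    ENNReal.toReal_add one_ne_top (by simpa using hr0)] at h
  simpa only [one_div, ENNReal.toReal_inv, ENNReal.toReal_one] using h

lemma div_sub_one_nonneg_of_young_exponents {p q r : ℝ} (hp : 0 < p) (hq : 1 ≤ q) (hr : 0 < r)
    (hpqr : 1 / p + 1 / q = 1 + 1 / r) : 0 ≤ r / p - 1 := by
  have hpr : 1 / r ≤ 1 / p := by linarith [(div_le_one (by linarith : (0 : ℝ) < q)).2 hq]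
  rw [sub_nonneg, one_le_div hp]
  exact (one_div_le_one_div hr hp).1 hpr

lemma lintegral_mul_lt_top_of_eLpNorm_two_lt_top {Y : Type*} [MeasurableSpace Y] {ν : Measure Y}
    {x y : Y → ℝ≥0∞} (hx : AEMeasurable x ν) (hy : AEMeasurable y ν)
    (hx2 : eLpNorm x 2 ν < ∞) (hy2 : eLpNorm y 2 ν < ∞) : ∫⁻ t, x t * y t ∂ν < ∞ := by
  have h := ENNReal.lintegral_mul_le_Lp_mul_Lq ν Real.HolderConjugate.two_two hx hy
  simp only [eLpNorm_eq_lintegral_rpow_enorm_toReal two_ne_zero ofNat_ne_top, enorm_eq_self,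
    toReal_ofNat] at hx2 hy2
  exact h.trans_lt (mul_lt_top hx2 hy2)

section Correlation

variable {X G E F : Type*} [MeasurableSpace X] [Countable G] [MeasurableSpace G]
  [DiscreteMeasurableSpace G] [NormedAddCommGroup E] [NormedAddCommGroup F]

lemma measurable_eLpNorm_count {u : X → G → E} (hu : ∀ n, StronglyMeasurable fun t => u t n)
    (p : ℝ≥0∞) : Measurable fun t => eLpNorm (u t) p Measure.count := by
  rcases eq_or_ne p 0 with rfl | hp0
  · simp
  rcases eq_or_ne p ∞ with rfl | hp_top
  · simpa using Measurable.iSup fun n => (hu n).enorm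
  · simp only [eLpNorm_eq_lintegral_rpow_enorm_toReal hp0 hp_top, lintegral_count]
    exact (Measurable.tsum fun n => (hu n).enorm.pow_const _).pow_const _

lemma lintegral_prod_count (μ : Measure X) [SFinite μ] {H : X × G → ℝ≥0∞} (hH : Measurable H) :
    ∫⁻ ω, H ω ∂μ.prod Measure.count = ∫⁻ t, ∑' n, H (t, n) ∂μ := by
  simp only [lintegral_prod _ hH.aemeasurable, lintegral_count]

lemma tsum_enorm_mul_le_eLpNorm_mul_eLpNorm {p q : ℝ≥0∞} [HolderTriple p q 1] (x : G → E)
    (y : G → F) :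
    ∑' n, ‖x n‖ₑ * ‖y n‖ₑ ≤ eLpNorm x p Measure.count * eLpNorm y q Measure.count := by
  have h := eLpNorm_le_eLpNorm_mul_eLpNorm_of_nnnorm (μ := Measure.count) (p := p) (q := q)
    (r := 1) (.of_discrete (f := x)) (.of_discrete (f := y)) (fun a b => ‖a‖ * ‖b‖) 1
    (.of_forall fun n => by simp)
  simpa [eLpNorm_one_eq_lintegral_enorm, lintegral_count, enorm_mul] using h

lemma eLpNorm_count_rpow_toReal {p : ℝ≥0∞} (hp0 : p ≠ 0) (hp : p ≠ ∞) (x : G → E) :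
    eLpNorm x p Measure.count ^ p.toReal = ∑' n, ‖x n‖ₑ ^ p.toReal := by
  rw [eLpNorm_eq_lintegral_rpow_enorm_toReal hp0 hp, lintegral_count, ← ENNReal.rpow_mul,
    one_div_mul_cancel (ENNReal.toReal_pos hp0 hp).ne', ENNReal.rpow_one]

variable [AddGroup G]

noncomputable def correlation (μ : Measure X) (u : X → G → E) (v : X → G → F) (s : G) : ℝ≥0∞ :=
  ∫⁻ t, ∑' n, ‖u t n‖ₑ * ‖v t (n + s)‖ₑ ∂μ

lemma eLpNorm_count_comp_add_right (x : G → E) (p : ℝ≥0∞) (s : G) :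
    eLpNorm (fun n => x (n + s)) p Measure.count = eLpNorm x p Measure.count :=
  eLpNorm_comp_measurePreserving .of_discrete (measurePreserving_add_right _ s)

lemma correlation_le_lintegral_eLpNorm_mul {p q : ℝ≥0∞} [HolderTriple p q 1] (μ : Measure X)
    (u : X → G → E) (v : X → G → F) (s : G) :
    correlation μ u v s ≤ ∫⁻ t, eLpNorm (u t) p Measure.count * eLpNorm (v t) q Measure.count ∂μ :=
  lintegral_mono fun t => by
    simpa only [eLpNorm_count_comp_add_right] using
      tsum_enorm_mul_le_eLpNorm_mul_eLpNorm (p := p) (q := q) (u t) (fun n => v t (n + s))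

lemma correlation_eq_lintegral_prod (μ : Measure X) [SFinite μ] {u : X → G → E} {v : X → G → F}
    (hu : ∀ n, StronglyMeasurable fun t => u t n) (hv : ∀ n, StronglyMeasurable fun t => v t n)
    (s : G) : correlation μ u v s =
      ∫⁻ ω, ‖u ω.1 ω.2‖ₑ * ‖v ω.1 (ω.2 + s)‖ₑ ∂μ.prod Measure.count :=
  (lintegral_prod_count μ (H := fun ω => ‖u ω.1 ω.2‖ₑ * ‖v ω.1 (ω.2 + s)‖ₑ)
    (measurable_from_prod_countable_left fun n => (hu n).enorm.mul (hv (n + s)).enorm)).symm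

lemma tsum_lintegral_prod_rpow_mul_shift_eq (μ : Measure X) [SFinite μ] {u : X → G → E}
    {v : X → G → F} (hu : ∀ n, StronglyMeasurable fun t => u t n)
    (hv : ∀ n, StronglyMeasurable fun t => v t n) (p q : ℝ) :
    ∑' s, ∫⁻ ω, ‖u ω.1 ω.2‖ₑ ^ p * ‖v ω.1 (ω.2 + s)‖ₑ ^ q ∂μ.prod Measure.count =
      ∫⁻ t, (∑' n, ‖u t n‖ₑ ^ p) * ∑' n, ‖v t n‖ₑ ^ q ∂μ := by
  have ha : Measurable fun ω : X × G => ‖u ω.1 ω.2‖ₑ ^ p :=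
    (measurable_from_prod_countable_left fun n => (hu n).enorm).pow_const p
  have hb (s : G) : Measurable fun ω : X × G => ‖v ω.1 (ω.2 + s)‖ₑ ^ q :=
    (measurable_from_prod_countable_left fun n => (hv (n + s)).enorm).pow_const q
  have hv_sum : Measurable fun t => ∑' n, ‖v t n‖ₑ ^ q :=
    Measurable.tsum fun n => (hv n).enorm.pow_const q
  calc _ = ∫⁻ ω, ∑' s, ‖u ω.1 ω.2‖ₑ ^ p * ‖v ω.1 (ω.2 + s)‖ₑ ^ q ∂μ.prod Measure.count :=
        (lintegral_tsum fun s => (ha.mul (hb s)).aemeasurable).symm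
    _ = ∫⁻ ω, ‖u ω.1 ω.2‖ₑ ^ p * ∑' n, ‖v ω.1 n‖ₑ ^ q ∂μ.prod Measure.count := by
        refine lintegral_congr fun ω => ?_
        rw [ENNReal.tsum_mul_left]
        exact congrArg _ ((Equiv.addLeft ω.2).tsum_eq fun n => ‖v ω.1 n‖ₑ ^ q)
    _ = _ := by
        rw [lintegral_prod_count μ (H := fun ω => ‖u ω.1 ω.2‖ₑ ^ p * ∑' n, ‖v ω.1 n‖ₑ ^ q)
          (ha.mul (hv_sum.comp measurable_fst))]
        simp only [ENNReal.tsum_mul_right]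

theorem tsum_correlation_rpow_le (μ : Measure X) [SFinite μ] {u : X → G → E} {v : X → G → F}
    (hu : ∀ n, StronglyMeasurable fun t => u t n) (hv : ∀ n, StronglyMeasurable fun t => v t n)
    {p q r : ℝ} (hp : 1 ≤ p) (hq : 1 ≤ q) (hr : 0 < r) (hpqr : 1 / p + 1 / q = 1 + 1 / r) :
    ∑' s, correlation μ u v s ^ r ≤
      (∫⁻ t, (∑' n, ‖u t n‖ₑ ^ p) * ∑' n, ‖v t n‖ₑ ^ q ∂μ) *
        ((∫⁻ t, ∑' n, ‖u t n‖ₑ ^ p ∂μ) ^ (r / p - 1) *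
          (∫⁻ t, ∑' n, ‖v t n‖ₑ ^ q ∂μ) ^ (r / q - 1)) := by
  set Ω := μ.prod (Measure.count : Measure G)
  set P := ∫⁻ t, ∑' n, ‖u t n‖ₑ ^ p ∂μ
  set Q := ∫⁻ t, ∑' n, ‖v t n‖ₑ ^ q ∂μ
  set T : G → ℝ≥0∞ := fun s => ∫⁻ ω, ‖u ω.1 ω.2‖ₑ ^ p * ‖v ω.1 (ω.2 + s)‖ₑ ^ q ∂Ω
  have ha : Measurable fun ω : X × G => ‖u ω.1 ω.2‖ₑ :=
    measurable_from_prod_countable_left fun n => (hu n).enorm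
  have hb (s : G) : Measurable fun ω : X × G => ‖v ω.1 (ω.2 + s)‖ₑ :=
    measurable_from_prod_countable_left fun n => (hv (n + s)).enorm
  have hP : ∫⁻ ω, ‖u ω.1 ω.2‖ₑ ^ p ∂Ω = P := lintegral_prod_count μ (ha.pow_const p)
  have hQ (s : G) : ∫⁻ ω, ‖v ω.1 (ω.2 + s)‖ₑ ^ q ∂Ω = Q := by
    rw [lintegral_prod_count μ ((hb s).pow_const q)]
    exact lintegral_congr fun t => (Equiv.addRight s).tsum_eq fun n => ‖v t n‖ₑ ^ q
  have hc (s : G) : correlation μ u v s ^ r ≤ T s * (P ^ (r / p - 1) * Q ^ (r / q - 1)) := by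
    have holder := lintegral_mul_le_of_young_exponents Ω ha.aemeasurable (hb s).aemeasurable
      hp hq hr hpqr
    rw [← correlation_eq_lintegral_prod μ hu hv, hP, hQ] at holder
    calc correlation μ u v s ^ r
        ≤ (T s ^ (1 / r) * P ^ (1 / p - 1 / r) * Q ^ (1 / q - 1 / r)) ^ r :=
          ENNReal.rpow_le_rpow holder hr.le
      _ = T s * (P ^ (r / p - 1) * Q ^ (r / q - 1)) := by
          simp only [ENNReal.mul_rpow_of_nonneg _ _ hr.le, ← ENNReal.rpow_mul]
          rw [one_div_mul_cancel hr.ne', ENNReal.rpow_one, mul_assoc]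
          congr 3 <;> field_simp
  calc ∑' s, correlation μ u v s ^ r ≤ ∑' s, T s * (P ^ (r / p - 1) * Q ^ (r / q - 1)) :=
        ENNReal.tsum_le_tsum hc
    _ = _ := by
        rw [ENNReal.tsum_mul_right]
        exact congrArg (· * _) (tsum_lintegral_prod_rpow_mul_shift_eq μ hu hv p q)

lemma eLpNorm_correlation_top_lt_top (μ : Measure X) {u : X → G → E} {v : X → G → F}
    (hu : ∀ n, StronglyMeasurable fun t => u t n) (hv : ∀ n, StronglyMeasurable fun t => v t n)
    {p q : ℝ≥0∞} [HolderTriple p q 1]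
    (hA : eLpNorm (fun t => eLpNorm (u t) p Measure.count) 2 μ < ∞)
    (hB : eLpNorm (fun t => eLpNorm (v t) q Measure.count) 2 μ < ∞) :
    eLpNorm (correlation μ u v) ∞ Measure.count < ∞ := by
  rw [eLpNorm_exponent_top, eLpNormEssSup_count]
  refine (iSup_le fun s =>
    correlation_le_lintegral_eLpNorm_mul (p := p) (q := q) μ u v s).trans_lt ?_
  exact lintegral_mul_lt_top_of_eLpNorm_two_lt_top (measurable_eLpNorm_count hu p).aemeasurable
    (measurable_eLpNorm_count hv q).aemeasurable hA hB

lemma eLpNorm_correlation_lt_top_of_ne_top (μ : Measure X) [SFinite μ] {u : X → G → E}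
    {v : X → G → F} (hu : ∀ n, StronglyMeasurable fun t => u t n)
    (hv : ∀ n, StronglyMeasurable fun t => v t n) {p q r : ℝ≥0∞} (hp : 1 ≤ p) (hq : 1 ≤ q)
    (hr0 : r ≠ 0) (hr : r ≠ ∞) (hpqr : 1 / p + 1 / q = 1 + 1 / r)
    (hA : eLpNorm (fun t => eLpNorm (u t) p Measure.count) (2 * p) μ < ∞)
    (hB : eLpNorm (fun t => eLpNorm (v t) q Measure.count) (2 * q) μ < ∞)
    (hA' : eLpNorm (fun t => eLpNorm (u t) p Measure.count) p μ < ∞)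
    (hB' : eLpNorm (fun t => eLpNorm (v t) q Measure.count) q μ < ∞) :
    eLpNorm (correlation μ u v) r Measure.count < ∞ := by
  have hp_top : p ≠ ∞ := ne_top_of_young_exponents hq hr hpqr
  have hq_top : q ≠ ∞ := ne_top_of_young_exponents hp hr (by rwa [add_comm])
  have hp0 : p ≠ 0 := (zero_lt_one.trans_le hp).ne'
  have hq0 : q ≠ 0 := (zero_lt_one.trans_le hq).ne'
  have hp1 : 1 ≤ p.toReal := by simpa using ENNReal.toReal_mono hp_top hp
  have hq1 : 1 ≤ q.toReal := by simpa using ENNReal.toReal_mono hq_top hq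
  have hrel := toReal_young_exponents hp hq hr0 hpqr
  have hr' := ENNReal.toReal_pos hr0 hr
  have young := tsum_correlation_rpow_le μ hu hv hp1 hq1 hr' hrel
  simp only [← eLpNorm_count_rpow_toReal hp0 hp_top,
    ← eLpNorm_count_rpow_toReal hq0 hq_top] at young
  rw [eLpNorm_lt_top_iff_lintegral_rpow_enorm_lt_top hr0 hr]
  simp only [enorm_eq_self, lintegral_count]
  have hAm := measurable_eLpNorm_count hu p
  have hBm := measurable_eLpNorm_count hv q
  have hA2 := eLpNorm_enorm_rpow (fun t => eLpNorm (u t) p Measure.count) (p := 2) (μ := μ)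
    (zero_lt_one.trans_le hp1)
  have hB2 := eLpNorm_enorm_rpow (fun t => eLpNorm (v t) q Measure.count) (p := 2) (μ := μ)
    (zero_lt_one.trans_le hq1)
  rw [ofReal_toReal hp_top] at hA2
  rw [ofReal_toReal hq_top] at hB2
  refine young.trans_lt (mul_lt_top ?_ (mul_lt_top ?_ ?_))
  · exact lintegral_mul_lt_top_of_eLpNorm_two_lt_top (hAm.pow_const _).aemeasurable
      (hBm.pow_const _).aemeasurable (hA2.trans_lt (rpow_lt_top_of_nonneg (by positivity) hA.ne))
      (hB2.trans_lt (rpow_lt_top_of_nonneg (by positivity) hB.ne))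
  · exact rpow_lt_top_of_nonneg
      (div_sub_one_nonneg_of_young_exponents (by positivity) hq1 hr' hrel)
      (lintegral_rpow_enorm_lt_top_of_eLpNorm_lt_top hp0 hp_top hA').ne
  · exact rpow_lt_top_of_nonneg (div_sub_one_nonneg_of_young_exponents (by positivity) hp1 hr'
      (by rwa [add_comm])) (lintegral_rpow_enorm_lt_top_of_eLpNorm_lt_top hq0 hq_top hB').ne

theorem eLpNorm_correlation_lt_top (μ : Measure X) [IsFiniteMeasure μ] {u : X → G → E}
    {v : X → G → F} (hu : ∀ n, StronglyMeasurable fun t => u t n)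
    (hv : ∀ n, StronglyMeasurable fun t => v t n) {p q r : ℝ≥0∞} (hp : 1 ≤ p) (hq : 1 ≤ q)
    (hpqr : 1 / p + 1 / q = 1 + 1 / r)
    (hA : eLpNorm (fun t => eLpNorm (u t) p Measure.count) (2 * p) μ < ∞)
    (hB : eLpNorm (fun t => eLpNorm (v t) q Measure.count) (2 * q) μ < ∞) :
    eLpNorm (correlation μ u v) r Measure.count < ∞ := by
  have hAL {p' : ℝ≥0∞} (h : p' ≤ 2 * p) :
      eLpNorm (fun t => eLpNorm (u t) p Measure.count) p' μ < ∞ :=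
    (MemLp.mono_exponent ⟨(measurable_eLpNorm_count hu p).aestronglyMeasurable, hA⟩ h).2
  have hBL {q' : ℝ≥0∞} (h : q' ≤ 2 * q) :
      eLpNorm (fun t => eLpNorm (v t) q Measure.count) q' μ < ∞ :=
    (MemLp.mono_exponent ⟨(measurable_eLpNorm_count hv q).aestronglyMeasurable, hB⟩ h).2
  rcases eq_or_ne r 0 with rfl | hr0
  · simp
  rcases eq_or_ne r ∞ with rfl | hr
  · have : HolderTriple p q 1 := holderConjugate_iff.2 (by simpa using hpqr)
    exact eLpNorm_correlation_top_lt_top μ hu hv (hAL (le_mul_of_one_le_right' hp))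
      (hBL (le_mul_of_one_le_right' hq))
  · exact eLpNorm_correlation_lt_top_of_ne_top μ hu hv hp hq hr0 hr hpqr hA hB
      (hAL (le_mul_of_one_le_left' one_le_two)) (hBL (le_mul_of_one_le_left' one_le_two))

end Correlation

lemma lnormZ_eq_eLpNorm {p : ℝ≥0∞} (hp : p ≠ 0) (a : ℤ → ℝ≥0∞) :
    lnormZ p a = eLpNorm a p Measure.count := by
  rcases eq_or_ne p ∞ with rfl | hp_top
  · simp [lnormZ]
  · simp [lnormZ, hp_top, eLpNorm_eq_lintegral_rpow_enorm_toReal hp hp_top, lintegral_count]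

lemma lnormZ_ofReal_abs_eq_eLpNorm {p : ℝ≥0∞} (hp : p ≠ 0) (x : ℤ → ℝ) :
    lnormZ p (fun s => ENNReal.ofReal |x s|) = eLpNorm x p Measure.count := by
  simp only [lnormZ_eq_eLpNorm hp, ← Real.enorm_eq_ofReal_abs, eLpNorm_enorm]

lemma memLpGrid_iff {p : ℝ≥0∞} (hp : p ≠ 0) {Δ : ℝ} {F : ℝ → ℝ≥0∞} :
    MemLpGrid p Δ F ↔ eLpNorm F p (volume.restrict (Ioc 0 Δ)) < ∞ := by
  rcases eq_or_ne p ∞ with rfl | hp_top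
  · simp [MemLpGrid, eLpNormEssSup]
  · simp [MemLpGrid, hp_top, eLpNorm_lt_top_iff_lintegral_rpow_enorm_lt_top hp hp_top]

lemma lintegral_eq_tsum_setLIntegral_Ioc {Δ : ℝ} (hΔ : 0 < Δ) (h : ℝ → ℝ≥0∞) :
    ∫⁻ t, h t = ∑' n : ℤ, ∫⁻ t in Ioc 0 Δ, h (t + n * Δ) := by
  have hdom := isAddFundamentalDomain_Ioc hΔ 0
  rw [zero_add] at hdom
  let e : ℤ ≃ AddSubgroup.zmultiples Δ := Equiv.ofBijective (fun n => ⟨n • Δ, n, rfl⟩)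
    ⟨fun m n hmn => (zsmul_left_strictMono hΔ).injective (congrArg Subtype.val hmn),
      fun ⟨_, n, hn⟩ => ⟨n, Subtype.ext hn⟩⟩
  rw [hdom.lintegral_eq_tsum'', ← e.tsum_eq]
  refine tsum_congr fun n => setLIntegral_congr_fun measurableSet_Ioc fun t _ => ?_
  simp [e, add_comm t, zsmul_eq_mul]

lemma lintegral_mul_shift_eq_correlation {Δ : ℝ} (hΔ : 0 < Δ) {f g : ℝ → ℝ} (hf : Measurable f)
    (hg : Measurable g) (s : ℤ) :
    ∫⁻ t, ENNReal.ofReal |f t * g (t + s * Δ)| = correlation (volume.restrict (Ioc 0 Δ))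
      (fun t (n : ℤ) => f (t + n * Δ)) (fun t (n : ℤ) => g (t + n * Δ)) s := by
  rw [lintegral_eq_tsum_setLIntegral_Ioc hΔ, correlation, lintegral_tsum fun n => by fun_prop]
  refine tsum_congr fun n => lintegral_congr fun t => ?_
  rw [← Real.enorm_eq_ofReal_abs, enorm_mul, Int.cast_add, add_mul, add_assoc]

/-- Discrete–continuous Young convolution inequality (Lemma on ℓ^γ membership). -/
theorem stmt0 (Δ : ℝ) (hΔ : 0 < Δ) (f g : ℝ → ℝ) (hf : Measurable f) (hg : Measurable g)
    (α β γ : ℝ≥0∞) (hα : 1 ≤ α) (hβ : 1 ≤ β) (hγ : 1 ≤ γ)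
    (hexp : 1 / α + 1 / β = 1 + 1 / γ)
    (hF : MemLpGrid (2 * α) Δ
      (fun t => lnormZ α (fun s : ℤ => ENNReal.ofReal |f (t + (s : ℝ) * Δ)|)))
    (hG : MemLpGrid (2 * β) Δ
      (fun t => lnormZ β (fun s : ℤ => ENNReal.ofReal |g (t + (s : ℝ) * Δ)|))) :
    lnormZ γ (fun s : ℤ => ∫⁻ t : ℝ, ENNReal.ofReal |f t * g (t + (s : ℝ) * Δ)|) < ∞ := by
  have hα0 : α ≠ 0 := (zero_lt_one.trans_le hα).ne'
  have hβ0 : β ≠ 0 := (zero_lt_one.trans_le hβ).ne'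
  rw [memLpGrid_iff (mul_ne_zero two_ne_zero hα0)] at hF
  rw [memLpGrid_iff (mul_ne_zero two_ne_zero hβ0)] at hG
  simp only [lnormZ_ofReal_abs_eq_eLpNorm hα0, lnormZ_ofReal_abs_eq_eLpNorm hβ0] at hF hG
  rw [lnormZ_eq_eLpNorm (zero_lt_one.trans_le hγ).ne',
    funext (lintegral_mul_shift_eq_correlation hΔ hf hg)]
  exact eLpNorm_correlation_lt_top _
    (fun n => (hf.comp (measurable_add_const _)).stronglyMeasurable)
    (fun n => (hg.comp (measurable_add_const _)).stronglyMeasurable) hα hβ hexp hF hG
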